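/- If (G_α)_{α<κ⁺} are pairwise edge-disjoint graphs on subsets of V and F_α is a κ-perfect g_α-factor of G_α for each α (with g_α = f ↾ V(G_α)), where for each vertex x: either f(x) ≤ κ and x belongs to exactly one V(G_α), or f(x) = κ⁺ and x belongs to V(G_β) for all β above some α, then F = ⋃_{α<κ⁺} F_α is a perfect f-factor of G = (V, ⋃_α E(G_α)). -/

import Mathlib

open Cardinal Set
open scoped Classical

namespace FFactor

variable {V : Type}

/-- Degree of `x` with respect to an edge set `F`. -/
def deg (F : Set (Sym2 V)) (x : V) : Cardinal :=
  Cardinal.mk {e : Sym2 V // e ∈ F ∧ x ∈ e}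

/-- `(G, f) ∈ C`: edges are genuine 2-element sets and `f x ≤ d_E x`. -/
def inC (E : Set (Sym2 V)) (f : V → Cardinal) : Prop :=
  (∀ e ∈ E, ¬ e.IsDiag) ∧ ∀ x, f x ≤ deg E x

/-- `F` is an `f`-factor of the graph with edge set `E`. -/
def IsFactor (E F : Set (Sym2 V)) (f : V → Cardinal) : Prop :=
  F ⊆ E ∧ ∀ x, deg F x ≤ f x

/-- `F` is a perfect `f`-factor. -/
def IsPerfect (E F : Set (Sym2 V)) (f : V → Cardinal) : Prop :=
  F ⊆ E ∧ ∀ x, deg F x = f x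

/-- The function `f_{x,y}`: decrease `f` by one at `x` and `y` when `1 ≤ f v < ℵ₀`. -/
noncomputable def fxy (f : V → Cardinal) (x y : V) : V → Cardinal := fun v =>
  if (v = x ∨ v = y) ∧ 1 ≤ f v ∧ f v < ℵ₀ then (((f v).toNat - 1 : ℕ) : Cardinal) else f v

/-- A property of pairs `(G, f)` (over arbitrary vertex types). -/
def GraphProp : Type 1 := ∀ (W : Type), Set (Sym2 W) → (W → Cardinal) → Prop

/-- `P` is a hereditary property. (`P (G,f)` entails `(G,f) ∈ C`.) -/
def Hereditary (P : GraphProp) : Prop :=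
  ∀ (W : Type) (E : Set (Sym2 W)) (f : W → Cardinal), P W E f →
    inC E f ∧ ∀ x : W, 0 < f x →
      ∃ y : W, 0 < f y ∧ s(x, y) ∈ E ∧ P W (E \ {s(x, y)}) (fxy f x y)

/-- `(G,f)` is an `α`-obstruction. -/
inductive IsObstruction : ∀ {W : Type}, Ordinal.{0} → Set (Sym2 W) → (W → Cardinal) → Prop
  | mk {W : Type} (α : Ordinal.{0}) (E : Set (Sym2 W)) (f : W → Cardinal) (x : W)
      (β : W → Ordinal.{0}) (hx : 0 < f x)
      (h : ∀ y : W, s(x, y) ∈ E → 0 < f y →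
        IsObstruction (β y) (E \ {s(x, y)}) (fxy f x y))
      (hα : α = ⨆ y : {y : W // s(x, y) ∈ E ∧ 0 < f y}, Order.succ (β y.1)) :
      IsObstruction α E f

/-- The property `P₂`. -/
def P2 : GraphProp := fun _ E f => inC E f ∧ ∀ α, ¬ IsObstruction α E f

/-- The property `P₁`. -/
def P1 : GraphProp := fun _ E f => inC E f ∧ ∃ F, IsPerfect E F f

/-- `(v_i)_{0 ≤ i < k}` is a trail (`k ≤ ω`, modelled as `k : ℕ∞`). -/
def IsTrail (E : Set (Sym2 V)) (k : ℕ∞) (v : ℕ → V) : Prop :=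
  1 ≤ k ∧
  (∀ i : ℕ, 0 < i → (i : ℕ∞) < k → s(v (i - 1), v i) ∈ E) ∧
  (∀ i j : ℕ, 0 < i → 0 < j → (i : ℕ∞) < k → (j : ℕ∞) < k → i ≠ j →
    s(v (i - 1), v i) ≠ s(v (j - 1), v j))

/-- `(v_i)_{0 ≤ i < k}` is an `F`-augmenting trail. -/
def IsAugTrail (E F : Set (Sym2 V)) (f : V → Cardinal) (k : ℕ∞) (v : ℕ → V) : Prop :=
  IsTrail E k v ∧ 1 < k ∧
  (∀ i : ℕ, 0 < i → (i : ℕ∞) < k → (s(v (i - 1), v i) ∈ F ↔ Even i)) ∧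
  deg F (v 0) < f (v 0) ∧
  (k = ⊤ ∨ ∃ n : ℕ, k = (n : ℕ∞) ∧ Even n ∧
    ((v 0 ≠ v (n - 1) ∧ deg F (v (n - 1)) < f (v (n - 1))) ∨
     (v 0 = v (n - 1) ∧ deg F (v (n - 1)) + 1 < f (v (n - 1)))))

/-- The property `P₄`. -/
def P4 : GraphProp := fun _ E f =>
  inC E f ∧ ∀ F, IsFactor E F f → ∀ x, deg F x < f x →
    ∃ (k : ℕ∞) (v : _ → _), v 0 = x ∧ IsAugTrail E F f k v

/-- `C` is closed unbounded in `o`. -/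
def IsClubIn (C : Set Ordinal) (o : Ordinal) : Prop :=
  C ⊆ Set.Iio o ∧
  (∀ a < o, ∃ b ∈ C, a ≤ b) ∧
  (∀ a < o, (C ∩ Set.Iio a).Nonempty → sSup (C ∩ Set.Iio a) = a → a ∈ C)

/-- `S` is stationary in `o`. -/
def IsStationaryIn (S : Set Ordinal) (o : Ordinal) : Prop :=
  ∀ C, IsClubIn C o → (S ∩ C).Nonempty

/-- `V_α = (V \ A) ∪ f⁻¹(c)`. -/
def subV (f : V → Cardinal) (c : Cardinal) (A : Set V) : Set V :=
  Aᶜ ∪ {x | f x = c}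

/-- `E_α = {{x,y} ∈ E : x ∈ V_α, y ∈ V \ A}`. -/
def subE (E : Set (Sym2 V)) (f : V → Cardinal) (c : Cardinal) (A : Set V) : Set (Sym2 V) :=
  {e ∈ E | ∃ x y, e = s(x, y) ∧ x ∈ subV f c A ∧ y ∉ A}

/-- The edge set of a graph induced on the vertex subset `S`. -/
def inducedE (S : Set V) (E' : Set (Sym2 V)) : Set (Sym2 ↥S) :=
  {e : Sym2 ↥S | e.map Subtype.val ∈ E'}

/-- `(A_α)_{α < c.ord}` is a `P`-destruction of `(G, f)`, `c = κ⁺`. -/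
def PDestruction (P : GraphProp) (E : Set (Sym2 V)) (f : V → Cardinal)
    (c : Cardinal) (A : Ordinal → Set V) : Prop :=
  (∀ α < c.ord, ∀ β, α ≤ β → β < c.ord → A α ⊆ A β) ∧
  (∀ α < c.ord, Cardinal.mk (A α) < c) ∧
  (∀ α < c.ord, Order.IsSuccLimit α → A α = ⋃ β : Set.Iio α, A β.1) ∧
  (⋃ α : Set.Iio c.ord, A α.1) = Set.univ ∧
  IsStationaryIn {α | α < c.ord ∧
    ¬ P ↥(subV f c (A α)) (inducedE (subV f c (A α)) (subE E f c (A α)))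
        (fun x => f x.1)} c.ord

/-- `(G, f)` is `P`-destructed. -/
def PDestructed (P : GraphProp) (E : Set (Sym2 V)) (f : V → Cardinal) (c : Cardinal) : Prop :=
  ∃ A : Ordinal → Set V, PDestruction P E f c A

/-- The function `f - d_F`, for `F` a finite factor (with `ℵ₀ - n = ℵ₀`). -/
noncomputable def fsub (f : V → Cardinal) (F : Set (Sym2 V)) : V → Cardinal := fun x =>
  if f x < ℵ₀ then (((f x).toNat - (deg F x).toNat : ℕ) : Cardinal) else f x

/-- `F` is a `κ`-perfect `f`-factor of `(V, E)`. -/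
def IsKPerfect (κ : Cardinal) (E F : Set (Sym2 V)) (f : V → Cardinal) : Prop :=
  IsFactor E F f ∧ (∀ x, f x ≤ κ → deg F x = f x) ∧ ∀ x, κ < f x → 0 < deg F x

/-!
A vertex `x` with `f x ≤ κ` lies in a single `V(G_α)`, so every edge of `F` at `x` lies in `F_α`
and `d_F(x) = d_{F_α}(x) = f x`. A vertex with `f x = κ⁺` has degree at most `κ⁺ · κ⁺ = κ⁺` in
the union of the `κ⁺` factors, and at least `κ⁺` because it has an edge in each of the `κ⁺` many
pairwise disjoint `F_β` with `β` above its threshold `α₀` (the tail `[α₀, κ⁺)` of the initial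
ordinal of an infinite cardinal has full size).
-/

universe u

theorem deg_mono {F G : Set (Sym2 V)} (h : F ⊆ G) (x : V) : deg F x ≤ deg G x :=
  mk_subtype_mono fun _ ⟨he, hx⟩ => ⟨h he, hx⟩

theorem deg_congr {F G : Set (Sym2 V)} {x : V} (h : ∀ e, x ∈ e → (e ∈ F ↔ e ∈ G)) :
    deg F x = deg G x :=
  mk_congr <| Equiv.subtypeEquivRight fun e =>
    ⟨fun ⟨he, hx⟩ => ⟨(h e hx).1 he, hx⟩, fun ⟨he, hx⟩ => ⟨(h e hx).2 he, hx⟩⟩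

theorem deg_eq_zero_iff {F : Set (Sym2 V)} {x : V} : deg F x = 0 ↔ ∀ e ∈ F, x ∉ e := by
  simp [deg, mk_eq_zero_iff, isEmpty_subtype]

theorem deg_pos_iff {F : Set (Sym2 V)} {x : V} : 0 < deg F x ↔ ∃ e ∈ F, x ∈ e := by
  simp [pos_iff_ne_zero, deg, mk_ne_zero_iff]

theorem deg_iUnion_le {ι : Type u} (F : ι → Set (Sym2 V)) (x : V) {c : Cardinal.{0}}
    (hc : ℵ₀ ≤ c) (hι : #ι ≤ lift.{u} c) (h : ∀ i, deg (F i) x ≤ c) :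
    deg (⋃ i, F i) x ≤ c := by
  have hinc : {e | e ∈ ⋃ i, F i ∧ x ∈ e} = ⋃ i, {e | e ∈ F i ∧ x ∈ e} := by
    ext e
    simp only [mem_ofPred_eq, mem_iUnion, exists_and_right]
  refine lift_le.{u}.1 ?_
  calc lift.{u} (deg (⋃ i, F i) x) = lift.{u} #(⋃ i, {e | e ∈ F i ∧ x ∈ e}) := by
        rw [← hinc]; rfl
    _ ≤ lift.{0} #ι * ⨆ i, lift.{u} (deg (F i) x) := mk_iUnion_le_lift _
    _ ≤ lift.{u} c * lift.{u} c :=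
        mul_le_mul' (by rwa [lift_uzero]) (ciSup_le' fun i => lift_le.2 (h i))
    _ = lift.{u} c := mul_eq_self (aleph0_le_lift.2 hc)

theorem lift_mk_le_deg_iUnion {ι : Type u} (F : ι → Set (Sym2 V)) (x : V)
    (hF : Pairwise fun i j => Disjoint (F i) (F j)) (h : ∀ i, 0 < deg (F i) x) :
    #ι ≤ lift.{u} (deg (⋃ i, F i) x) := by
  choose e heF hxe using fun i => deg_pos_iff.1 (h i)
  rw [← lift_uzero #ι, deg]
  refine lift_mk_le'.2 ⟨⟨fun i => ⟨e i, mem_iUnion.2 ⟨i, heF i⟩, hxe i⟩, fun i j hij => ?_⟩⟩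
  by_contra hne
  exact (hF hne).ne_of_mem (heF i) (heF j) (congrArg Subtype.val hij)

theorem lift_le_mk_Ico_ord {c : Cardinal.{u}} (hc : ℵ₀ ≤ c) {a : Ordinal.{u}} (ha : a < c.ord) :
    lift.{u + 1} c ≤ #(Ico a c.ord) := by
  by_contra! hlt
  have hIio : #(Iio a) < lift.{u + 1} c := by
    rw [mk_Iio_ordinal, lift_lt]; exact lt_ord.1 ha
  have := calc lift.{u + 1} c = #(Iio c.ord) := by rw [mk_Iio_ordinal, card_ord]
    _ ≤ #(Iio a ∪ Ico a c.ord : Set Ordinal) := mk_le_mk_of_subset Iio_subset_Iio_union_Ico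
    _ ≤ #(Iio a) + #(Ico a c.ord) := mk_union_le _ _
    _ < lift.{u + 1} c := add_lt_of_lt (aleph0_le_lift.2 hc) hIio hlt
  exact this.false

/-- gluing direction of Theorem 3. -/
theorem statement_16 (κ : Cardinal) (hκ : ℵ₀ ≤ κ) (V : Type) (f : V → Cardinal)
    (Vs : Ordinal → Set V) (Es Fs : Ordinal → Set (Sym2 V))
    (hEV : ∀ α < (Order.succ κ).ord, ∀ e ∈ Es α, ∀ x ∈ e, x ∈ Vs α)
    (hdisj : ∀ α < (Order.succ κ).ord, ∀ β < (Order.succ κ).ord, α ≠ β →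
      Es α ∩ Es β = ∅)
    (hFs : ∀ α < (Order.succ κ).ord, Fs α ⊆ Es α ∧
      (∀ x ∈ Vs α, deg (Fs α) x ≤ f x) ∧
      (∀ x ∈ Vs α, f x ≤ κ → deg (Fs α) x = f x) ∧
      (∀ x ∈ Vs α, κ < f x → 0 < deg (Fs α) x))
    (hvert : ∀ x : V,
      (f x ≤ κ ∧ ∃! α, α < (Order.succ κ).ord ∧ x ∈ Vs α) ∨
      (f x = Order.succ κ ∧ ∃ α₀ < (Order.succ κ).ord,
        ∀ β, α₀ ≤ β → β < (Order.succ κ).ord → x ∈ Vs β)) :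
    IsPerfect (⋃ α : Set.Iio (Order.succ κ).ord, Es α.1)
      (⋃ α : Set.Iio (Order.succ κ).ord, Fs α.1) f := by
  have hκc : κ < Order.succ κ := Order.lt_succ κ
  have hc : ℵ₀ ≤ Order.succ κ := hκ.trans hκc.le
  have hFV : ∀ β < (Order.succ κ).ord, ∀ e ∈ Fs β, ∀ x ∈ e, x ∈ Vs β :=
    fun β hβ e he => hEV β hβ e ((hFs β hβ).1 he)
  refine ⟨iUnion_mono fun α => (hFs α.1 α.2).1, fun x => ?_⟩
  rcases hvert x with ⟨hfx, α, ⟨hα, hxα⟩, huniq⟩ | ⟨hfx, α₀, hα₀, hall⟩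
  · refine (deg_congr fun e hxe => ⟨fun he => ?_, fun he => mem_iUnion.2 ⟨⟨α, hα⟩, he⟩⟩).trans
      ((hFs α hα).2.2.1 x hxα hfx)
    obtain ⟨⟨β, hβ⟩, heβ⟩ := mem_iUnion.1 he
    rwa [← huniq β ⟨hβ, hFV β hβ e heβ x hxe⟩]
  rw [hfx]
  refine le_antisymm (deg_iUnion_le _ x hc ?_ fun ⟨β, hβ⟩ => ?_) ?_
  · rw [mk_Iio_ordinal, card_ord]
  · by_cases hxβ : x ∈ Vs β
    · exact ((hFs β hβ).2.1 x hxβ).trans_eq hfx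
    · exact (deg_eq_zero_iff.2 fun e he hxe => hxβ (hFV β hβ e he x hxe)).trans_le zero_le
  have hpos (β : Ico α₀ (Order.succ κ).ord) : 0 < deg (Fs β) x :=
    (hFs β β.2.2).2.2.2 x (hall β β.2.1 β.2.2) (hfx ▸ hκc)
  have hFdisj : Pairwise fun β γ : Ico α₀ (Order.succ κ).ord => Disjoint (Fs β) (Fs γ) :=
    fun β γ hne => disjoint_iff_inter_eq_empty.2 <| subset_empty_iff.1 <|
      (inter_subset_inter (hFs β β.2.2).1 (hFs γ γ.2.2).1).trans_eq
        (hdisj β β.2.2 γ γ.2.2 (Subtype.coe_ne_coe.2 hne))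
  have hsub : (⋃ β : Ico α₀ (Order.succ κ).ord, Fs β) ⊆ ⋃ β : Iio (Order.succ κ).ord, Fs β :=
    iUnion_subset fun β => subset_iUnion_of_subset ⟨β, β.2.2⟩ subset_rfl
  exact lift_le.1 <| (lift_le_mk_Ico_ord hc hα₀).trans <|
    (lift_mk_le_deg_iUnion _ x hFdisj hpos).trans <| lift_le.2 <| deg_mono hsub x

end FFactor
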